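/- For complex q with |q| < 1 and positive integer k, the Lambert-type series identity holds: ∑_{n=1}^∞ σ^#_{2k-1}(n) q^n = ∑_{i=0}^∞ Q(q^{2i+1})/(1-q^{2i+1})^{2k}, where Q(z) = ∑_{j=0}^{2k-1} j! · S(2k-1,j) · z^j (1-z)^{2k-j-1} and σ^#_m(n) = ∑_{d|n, n/d odd} d^m. -/

import Mathlib

/-- Stirling numbers of the second kind. -/
def stirling2 : ℕ → ℕ → ℕ
  | 0, 0 => 0 + 1
  | 0, _ + 1 => 0
  | _ + 1, 0 => 0
  | n + 1, k + 1 => (k + 1) * stirling2 n (k + 1) + stirling2 n k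

/-- Modified divisor sum: sum of `d ^ m` over divisors `d` of `n` with `n / d` odd. -/
def sigmaHash (m n : ℕ) : ℕ := ∑ d ∈ n.divisors.filter (fun d => Odd (n / d)), d ^ m

/-!
Writing `d ^ m = ∑ j, j! S(m, j) (d choose j)` and using
`∑_d (d choose j) z ^ d = z ^ j / (1 - z) ^ (j + 1)` gives
`∑_{d ≥ 1} d ^ m z ^ d = Q(z) / (1 - z) ^ (m + 1)` for `m = 2k - 1`. Substituting `z = q ^ (2i + 1)`
and summing over `i`, the right-hand side becomes the absolutely convergent double series
`∑_{i, d} d ^ m q ^ (d (2i + 1))`, and grouping its terms by `n = d (2i + 1)` yields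
`σ^#_m(n) q ^ n`.
-/

open Finset

theorem stirling2_eq_stirlingSecond : ∀ n k : ℕ, stirling2 n k = Nat.stirlingSecond n k
  | 0, 0 | 0, _ + 1 | _ + 1, 0 => rfl
  | n + 1, k + 1 => by
    rw [stirling2, Nat.stirlingSecond_succ_succ, stirling2_eq_stirlingSecond n (k + 1),
      stirling2_eq_stirlingSecond n k]

namespace Nat

theorem self_mul_descFactorial (n j : ℕ) :
    n * n.descFactorial j = n.descFactorial (j + 1) + j * n.descFactorial j := by
  rw [descFactorial_succ, ← add_mul]
  rcases le_or_gt j n with h | h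
  · rw [Nat.sub_add_cancel h]
  · simp [descFactorial_of_lt h]

theorem pow_eq_sum_stirlingSecond_mul_descFactorial (m n : ℕ) :
    n ^ m = ∑ j ∈ range (m + 1), stirlingSecond m j * n.descFactorial j := by
  induction m with
  | zero => simp
  | succ m ih =>
    have shift : ∑ j ∈ range (m + 1), (j + 1) * stirlingSecond m (j + 1) * n.descFactorial (j + 1)
        = ∑ j ∈ range (m + 1), j * stirlingSecond m j * n.descFactorial j := by
      rw [sum_range_succ, stirlingSecond_eq_zero_of_lt (by omega), sum_range_succ' _ m]
      simp
    rw [sum_range_succ', stirlingSecond_succ_zero, zero_mul, add_zero]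
    simp only [stirlingSecond_succ_succ, add_mul _ (stirlingSecond m _), sum_add_distrib]
    rw [shift, pow_succ, ih, sum_mul, ← sum_add_distrib]
    refine sum_congr rfl fun j _ => ?_
    rw [mul_assoc, mul_comm _ n, self_mul_descFactorial]
    ring

end Nat

theorem HasSum.nat_succ_of_eq_zero {G : Type*} [AddCommGroup G] [TopologicalSpace G]
    [IsTopologicalAddGroup G] {f : ℕ → G} {a : G} (hf : HasSum f a) (h0 : f 0 = 0) :
    HasSum (fun n => f (n + 1)) a := by
  simpa [h0] using (hasSum_nat_add_iff' 1).2 hf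

section PowerSeries

variable {𝕜 : Type*} [NormedField 𝕜] {z : 𝕜}

theorem hasSum_choose_mul_pow (j : ℕ) (hz : ‖z‖ < 1) :
    HasSum (fun d : ℕ => (d.choose j : 𝕜) * z ^ d) (z ^ j / (1 - z) ^ (j + 1)) := by
  have low : ∑ d ∈ range j, (d.choose j : 𝕜) * z ^ d = 0 :=
    sum_eq_zero fun d hd => by simp [Nat.choose_eq_zero_of_lt (mem_range.1 hd)]
  rw [← hasSum_nat_add_iff' j, low, sub_zero, ← mul_one_div]
  exact ((hasSum_choose_mul_geometric_of_norm_lt_one j hz).mul_left (z ^ j)).congr_fun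
    fun d => by rw [add_comm d j, pow_add]; ring

theorem hasSum_pow_mul_geometric_stirlingSecond (m : ℕ) (hz : ‖z‖ < 1) :
    HasSum (fun d : ℕ => (d : 𝕜) ^ m * z ^ d)
      ((∑ j ∈ range (m + 1), (j.factorial * Nat.stirlingSecond m j : 𝕜) * z ^ j *
        (1 - z) ^ (m - j)) / (1 - z) ^ (m + 1)) := by
  have hz1 : 1 - z ≠ 0 := sub_ne_zero.2 fun h => by simp [← h] at hz
  have pow_eq (d : ℕ) : (d : 𝕜) ^ m =
      ∑ j ∈ range (m + 1), (j.factorial * Nat.stirlingSecond m j : 𝕜) * d.choose j := by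
    have := Nat.pow_eq_sum_stirlingSecond_mul_descFactorial m d
    simp only [Nat.descFactorial_eq_factorial_mul_choose] at this
    rw [← Nat.cast_pow, this]
    push_cast
    exact sum_congr rfl fun j _ => by ring
  have partial_fractions : (∑ j ∈ range (m + 1), (j.factorial * Nat.stirlingSecond m j : 𝕜) *
      z ^ j * (1 - z) ^ (m - j)) / (1 - z) ^ (m + 1) = ∑ j ∈ range (m + 1),
      (j.factorial * Nat.stirlingSecond m j : 𝕜) * (z ^ j / (1 - z) ^ (j + 1)) := by
    rw [sum_div]
    refine sum_congr rfl fun j hj => ?_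
    rw [show m + 1 = (m - j) + (j + 1) by have := mem_range.1 hj; omega, pow_add]
    field_simp
  rw [partial_fractions]
  refine (hasSum_sum fun j _ => (hasSum_choose_mul_pow j hz).mul_left _).congr_fun fun d => ?_
  rw [pow_eq, sum_mul]
  exact sum_congr rfl fun j _ => by ring

end PowerSeries

/-- The pair `(i, d)` encodes the factorization `(2i + 1)(d + 1)` with odd cofactor `2i + 1`. -/
def oddMul (p : ℕ × ℕ) : ℕ := (2 * p.1 + 1) * (p.2 + 1)

theorem oddMul_preimage_singleton (n : ℕ) :
    oddMul ⁻¹' {n} =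
      (fun d => (n / d / 2, d - 1)) '' ↑(n.divisors.filter fun d => Odd (n / d)) := by
  ext ⟨i, e⟩
  simp only [Set.mem_preimage, Set.mem_singleton_iff, Set.mem_image, coe_filter,
    Set.mem_ofPred_eq, Nat.mem_divisors, oddMul, Prod.mk.injEq]
  constructor
  · rintro rfl
    have hquot : (2 * i + 1) * (e + 1) / (e + 1) = 2 * i + 1 := Nat.mul_div_cancel _ e.succ_pos
    refine ⟨e + 1, ⟨⟨dvd_mul_left _ _, by positivity⟩, ?_⟩, ?_, rfl⟩
    · rw [hquot]
      exact odd_two_mul_add_one i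
    · rw [hquot]
      omega
  · rintro ⟨d, ⟨⟨⟨c, rfl⟩, hn⟩, hodd⟩, rfl, rfl⟩
    have hd : 0 < d := Nat.pos_of_ne_zero (left_ne_zero_of_mul hn)
    rw [Nat.mul_div_cancel_left _ hd] at hodd ⊢
    obtain ⟨a, rfl⟩ := hodd
    rw [Nat.sub_add_cancel hd, mul_comm]
    congr 2
    omega

theorem sigmaHash_eq_tsum_preimage_oddMul {R : Type*} [Semiring R] [TopologicalSpace R]
    (m n : ℕ) : (sigmaHash m n : R) = ∑' p : oddMul ⁻¹' {n}, ((p.1.2 + 1 : ℕ) : R) ^ m := by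
  rw [oddMul_preimage_singleton, tsum_image fun p : ℕ × ℕ => ((p.2 + 1 : ℕ) : R) ^ m,
    Finset.tsum_subtype' _ fun d => ((d - 1 + 1 : ℕ) : R) ^ m, sigmaHash]
  · rw [Nat.cast_sum]
    refine sum_congr rfl fun d hd => ?_
    rw [Nat.sub_add_cancel (Nat.pos_of_mem_divisors (mem_filter.1 hd).1), Nat.cast_pow]
  · intro d hd d' hd' h
    have hd_pos := Nat.pos_of_mem_divisors (mem_filter.1 hd).1
    have hd'_pos := Nat.pos_of_mem_divisors (mem_filter.1 hd').1
    have hpred : d - 1 = d' - 1 := congrArg Prod.snd h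
    omega

section LambertSeries

variable {𝕜 : Type*} [NontriviallyNormedField 𝕜] [CompleteSpace 𝕜] [NormSMulClass ℤ 𝕜] {q : 𝕜}

theorem summable_pow_mul_pow_oddMul (m : ℕ) (hq : ‖q‖ < 1) :
    Summable fun p : ℕ × ℕ => ((p.2 + 1 : ℕ) : 𝕜) ^ m * q ^ oddMul p := by
  have hodd : Function.Injective fun i : ℕ => (⟨2 * i + 1, by omega⟩ : ℕ+) := fun i i' h => by
    have := congrArg PNat.val h
    simp only [PNat.mk_coe] at this
    omega
  exact ((summable_prod_mul_pow m hq).comp_injective (hodd.prodMap Nat.succPNat_injective)).congr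
    fun _ => rfl

theorem hasSum_sigmaHash_mul_pow (m : ℕ) (hq : ‖q‖ < 1) :
    HasSum (fun n => (sigmaHash m n : 𝕜) * q ^ n)
      (∑' p : ℕ × ℕ, ((p.2 + 1 : ℕ) : 𝕜) ^ m * q ^ oddMul p) := by
  refine ((summable_pow_mul_pow_oddMul m hq).hasSum.tsum_fiberwise oddMul).congr_fun fun n => ?_
  rw [sigmaHash_eq_tsum_preimage_oddMul, ← tsum_mul_right]
  exact tsum_congr fun p => by rw [p.2]

end LambertSeries

theorem stmt_12 (k : ℕ) (hk : 1 ≤ k) (q : ℂ) (hq : ‖q‖ < 1)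
    (Q : ℂ → ℂ)
    (hQ : ∀ z : ℂ, Q z = ∑ j ∈ Finset.range (2 * k), (j.factorial : ℂ) *
        (stirling2 (2 * k - 1) j : ℂ) * z ^ j * (1 - z) ^ (2 * k - j - 1)) :
    ∑' n : ℕ, (sigmaHash (2 * k - 1) (n + 1) : ℂ) * q ^ (n + 1) =
      ∑' i : ℕ, Q (q ^ (2 * i + 1)) / (1 - q ^ (2 * i + 1)) ^ (2 * k) := by
  have hm : 2 * k - 1 + 1 = 2 * k := by omega
  set m := 2 * k - 1
  rw [((hasSum_sigmaHash_mul_pow m hq).nat_succ_of_eq_zero (by simp [sigmaHash])).tsum_eq,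
    (summable_pow_mul_pow_oddMul m hq).tsum_prod]
  refine tsum_congr fun i => ?_
  set z := q ^ (2 * i + 1)
  have hz : ‖z‖ < 1 := by rw [norm_pow]; exact pow_lt_one₀ (norm_nonneg _) hq (by omega)
  have hsum := (hasSum_pow_mul_geometric_stirlingSecond m hz).nat_succ_of_eq_zero
    (by simp [show m ≠ 0 by omega])
  calc ∑' d, ((d + 1 : ℕ) : ℂ) ^ m * q ^ oddMul (i, d)
      = ∑' d, ((d + 1 : ℕ) : ℂ) ^ m * z ^ (d + 1) := by simp only [oddMul, pow_mul]; rfl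
    _ = Q z / (1 - z) ^ (2 * k) := by
      rw [hsum.tsum_eq, hQ, hm]
      congr 1
      refine sum_congr rfl fun j _ => ?_
      rw [stirling2_eq_stirlingSecond, Nat.sub_right_comm]
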